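/- arXiv:math/0507581 — 2 statements merged into one kernel-verified Lean document; each statement's English description precedes it below -/
import Mathlib

section
/- Let k be an algebraically closed field, Z a commutative associative unital k-algebra, and χ : Z → k a k-algebra homomorphism. Suppose f : M' → M and g : M → M'' are Z-linear maps between Z-modules with range f = ker g (an exact sequence), and suppose each of M', M, M'' is locally finite over Z (every element is contained in a Z-submodule that is finite-dimensional over k). Then the induced sequence of generalized eigenspaces M'_χ → M_χ → M''_χ is exact, i.e. the image of M'_χ under f equals the kernel of g restricted to M_χ. -/
universe uV

/-- The generalized eigenspace of a `Z`-module `M` attached to a `k`-algebra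
homomorphism `χ : Z → k`: the set of `m ∈ M` such that for every `z ∈ Z` some
power (with exponent `≥ 1`) of `z - χ(z)·1` annihilates `m`. -/
def genEigSet {k Z : Type*} [CommRing k] [CommRing Z] [Algebra k Z]
    (χ : Z →ₐ[k] k) (M : Type*) [AddCommGroup M] [Module Z M] : Set M :=
  {m : M | ∀ z : Z, ∃ n : ℕ, 1 ≤ n ∧ ((z - algebraMap k Z (χ z)) ^ n) • m = 0}

/-- A `Z`-module `M` (where `Z` is a `k`-algebra) is locally finite over `Z` if every
element is contained in a `Z`-submodule that is finite-dimensional over `k`. -/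
def IsLocallyFiniteModule (k Z M : Type*) [Field k] [CommRing Z] [Algebra k Z]
    [AddCommGroup M] [Module k M] [Module Z M] [IsScalarTower k Z M] : Prop :=
  ∀ m : M, ∃ N : Submodule Z M, m ∈ N ∧ FiniteDimensional k (N.restrictScalars k)

section Aux

variable {k Z : Type*} [Field k] [CommRing Z] [Algebra k Z]

private lemma lsmulk_pow_apply {M : Type*} [AddCommGroup M] [Module k M] [Module Z M]
    [IsScalarTower k Z M] (w : Z) (n : ℕ) (x : M) :
    ((((LinearMap.lsmul Z M) w).restrictScalars k) ^ n) x = w ^ n • x := by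
  induction n generalizing x with
  | zero => simp
  | succ n ih =>
    rw [pow_succ, Module.End.mul_apply, LinearMap.restrictScalars_apply, LinearMap.lsmul_apply,
      ih, pow_succ, mul_smul]

private lemma restrict_pow_coe {V : Type*} [AddCommGroup V] [Module k V]
    (f : V →ₗ[k] V) (p : Submodule k V) (h : ∀ x ∈ p, f x ∈ p) (n : ℕ) (x : p) :
    (((f.restrict h) ^ n) x : V) = (f ^ n) (x : V) := by
  induction n generalizing x with
  | zero => simp
  | succ n ih =>
    rw [pow_succ, pow_succ, Module.End.mul_apply, Module.End.mul_apply, ih,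
      LinearMap.restrict_coe_apply]

/-- An element in the generalized eigenspaces of two distinct scalars is zero. -/
private lemma eig_unique {M : Type*} [AddCommGroup M] [Module k M] [Module Z M]
    [IsScalarTower k Z M] (z : Z) (a b : k) (hab : a ≠ b) (m : M) :
    ∀ N p : ℕ, (z - algebraMap k Z a) ^ N • m = 0 → (z - algebraMap k Z b) ^ p • m = 0 → m = 0 := by
  intro N
  induction N generalizing m with
  | zero => intro p h1 _; simpa using h1
  | succ N ih =>
    intro p h1 h2
    set m1 := (z - algebraMap k Z a) • m with hm1
    have h1' : (z - algebraMap k Z a) ^ N • m1 = 0 := by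
      rw [hm1, smul_smul, ← pow_succ, h1]
    have h2' : (z - algebraMap k Z b) ^ p • m1 = 0 := by
      rw [hm1, smul_smul, mul_comm, ← smul_smul, h2, smul_zero]
    have hm1z : (z - algebraMap k Z a) • m = 0 := ih m1 p h1' h2'
    -- now m is an honest eigenvector for z with eigenvalue a
    have key : ∀ q : ℕ, (z - algebraMap k Z b) ^ q • m = (a - b) ^ q • m := by
      intro q
      induction q with
      | zero => simp
      | succ q ihq =>
        have hstep : (z - algebraMap k Z b) • m = (a - b) • m := by
          have : z • m = algebraMap k Z a • m := by
            have := hm1z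
            rwa [sub_smul, sub_eq_zero] at this
          rw [sub_smul, this, ← sub_smul, ← map_sub, algebraMap_smul]
        rw [pow_succ, mul_smul, hstep, ← smul_comm, ihq, smul_smul, ← pow_succ']
    have h0 : (a - b) ^ p • m = 0 := by rw [← key p, h2]
    have : (a - b) ^ p ≠ 0 := pow_ne_zero _ (sub_ne_zero.mpr hab)
    exact (smul_eq_zero.mp h0).resolve_left this

/-- One step of the correction process: if `m` is killed by a power of `w` and has a
preimage in a finite-dimensional module `V`, it has a preimage killed by a power of `w`. -/
private lemma step {M V : Type*} [AddCommGroup M] [Module k M] [Module Z M] [IsScalarTower k Z M]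
    [AddCommGroup V] [Module k V] [Module Z V] [IsScalarTower k Z V] [FiniteDimensional k V]
    (F : V →ₗ[Z] M) (m : M) (v : V) (hv : F v = m) (w : Z) (p : ℕ)
    (hm : w ^ p • m = 0) :
    ∃ (u : V) (n : ℕ), 1 ≤ n ∧ F u = m ∧ w ^ n • u = 0 := by
  classical
  set φ : V →ₗ[k] V := ((LinearMap.lsmul Z V) w).restrictScalars k with hφ
  have hφ_apply : ∀ x : V, φ x = w • x := fun x => rfl
  obtain ⟨n, hcompl, hnp, hn1⟩ :
      ∃ n, IsCompl (LinearMap.ker (φ ^ n)) (LinearMap.range (φ ^ n)) ∧ p ≤ n ∧ 1 ≤ n := by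
    have h := (φ.eventually_isCompl_ker_pow_range_pow.and
      ((Filter.eventually_ge_atTop p).and (Filter.eventually_ge_atTop 1))).exists
    obtain ⟨n, h1, h2, h3⟩ := h
    exact ⟨n, h1, h2, h3⟩
  -- decompose v
  have hv_mem : v ∈ LinearMap.ker (φ ^ n) ⊔ LinearMap.range (φ ^ n) := by
    rw [hcompl.codisjoint.eq_top]; trivial
  obtain ⟨a, ha, b, hb, hab⟩ := Submodule.mem_sup.mp hv_mem
  -- w^n • m = 0
  have hmn : w ^ n • m = 0 := by
    obtain ⟨q, rfl⟩ := Nat.le.dest hnp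
    rw [pow_add, mul_comm, mul_smul, hm, smul_zero]
  -- the image of the range part
  set R : Submodule k M :=
      Submodule.map (F.restrictScalars k) (LinearMap.range (φ ^ n)) with hR
  have hφ_mapsto : ∀ x ∈ LinearMap.range (φ ^ n), φ x ∈ LinearMap.range (φ ^ n) := by
    rintro x ⟨y, rfl⟩
    exact ⟨φ y, by rw [← Module.End.mul_apply, ← Module.End.mul_apply, ← pow_succ, ← pow_succ']⟩
  -- φ restricted to range is injective hence surjective
  set φ' := φ.restrict hφ_mapsto with hφ'
  have hker1 : LinearMap.ker φ ≤ LinearMap.ker (φ ^ n) := by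
    intro x hx
    obtain ⟨q, rfl⟩ := Nat.le.dest hn1
    rw [LinearMap.mem_ker] at hx ⊢
    rw [add_comm, pow_add, pow_one, Module.End.mul_apply, hx, map_zero]
  have hφ'_inj : Function.Injective φ' := by
    intro x y hxy
    have h0 : φ ((x : V) - y) = 0 := by
      have := congrArg (Subtype.val) hxy
      rw [LinearMap.restrict_coe_apply, LinearMap.restrict_coe_apply] at this
      rw [map_sub, this, sub_self]
    have hmem : (x : V) - y ∈ LinearMap.ker (φ ^ n) ⊓ LinearMap.range (φ ^ n) :=
      ⟨hker1 h0, Submodule.sub_mem _ x.2 y.2⟩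
    rw [hcompl.inf_eq_bot] at hmem
    exact Subtype.ext (sub_eq_zero.mp hmem)
  have hφ'_surj : Function.Surjective φ' := (LinearMap.injective_iff_surjective).mp hφ'_inj
  -- ψ : multiplication by w on M, restricted to R
  set ψ : M →ₗ[k] M := ((LinearMap.lsmul Z M) w).restrictScalars k with hψ
  have hψ_mapsto : ∀ x ∈ R, ψ x ∈ R := by
    rintro x ⟨y, hy, rfl⟩
    refine ⟨φ y, hφ_mapsto y hy, ?_⟩
    show F (w • y) = ψ (F y)
    rw [map_smul]; rfl
  set ψ' := ψ.restrict hψ_mapsto with hψ'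
  have hψ'_surj : Function.Surjective ψ' := by
    rintro ⟨x, hx⟩
    obtain ⟨y, hy, rfl⟩ := hx
    obtain ⟨s, hs⟩ := hφ'_surj ⟨y, hy⟩
    refine ⟨⟨F s, ⟨s, s.2, rfl⟩⟩, ?_⟩
    apply Subtype.ext
    rw [LinearMap.restrict_coe_apply]
    show ψ (F (s : V)) = F y
    have hsy : φ (s : V) = y := by
      have := congrArg Subtype.val hs
      rwa [LinearMap.restrict_coe_apply] at this
    calc ψ (F (s : V)) = w • F (s : V) := rfl
      _ = F (w • (s : V)) := (map_smul F w _).symm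
      _ = F (φ (s : V)) := rfl
      _ = F y := by rw [hsy]
  haveI : FiniteDimensional k R := by
    have : FiniteDimensional k (LinearMap.range (φ ^ n)) := inferInstance
    exact Module.Finite.map _ _
  have hψ'_inj : Function.Injective ψ' := (LinearMap.injective_iff_surjective).mpr hψ'_surj
  have hψ'n_inj : Function.Injective (ψ' ^ n) := by
    intro x y hxy
    rw [Module.End.pow_apply, Module.End.pow_apply] at hxy
    exact (hψ'_inj.iterate n) hxy
  -- F b is killed
  have hFb_mem : F b ∈ R := ⟨b, hb, rfl⟩
  have hFa : w ^ n • F a = 0 := by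
    rw [← map_smul, ← lsmulk_pow_apply (k := k) w n a]
    have h0 : ((((LinearMap.lsmul Z V) w).restrictScalars k) ^ n) a = 0 := ha
    rw [h0, map_zero]
  have hFb : w ^ n • F b = 0 := by
    have hFv : F a + F b = m := by rw [← map_add, hab, hv]
    have : F b = m - F a := by rw [← hFv]; abel
    rw [this, smul_sub, hmn, hFa, sub_zero]
  have hFb0 : F b = 0 := by
    have h1 : (ψ' ^ n) ⟨F b, hFb_mem⟩ = 0 := by
      apply Subtype.ext
      rw [restrict_pow_coe]
      show ((ψ ^ n) (F b) : M) = 0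
      rw [hψ, lsmulk_pow_apply, hFb]
    have h2 : (ψ' ^ n) 0 = 0 := map_zero _
    have := hψ'n_inj (h1.trans h2.symm)
    exact congrArg Subtype.val this
  refine ⟨a, n, hn1, ?_, ?_⟩
  · have hFv : F a + F b = m := by rw [← map_add, hab, hv]
    rw [← hFv, hFb0, add_zero]
  · have h0 : (φ ^ n) a = 0 := ha
    rw [← lsmulk_pow_apply (k := k) w n a, ← hφ, h0]


private lemma iter {M : Type*} [AddCommGroup M] [Module k M] [Module Z M] [IsScalarTower k Z M]
    (m : M) : ∀ (l : List Z), (∀ w ∈ l, ∃ p : ℕ, w ^ p • m = 0) →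
    ∀ (V : Type uV) [AddCommGroup V] [Module k V] [Module Z V] [IsScalarTower k Z V]
    [FiniteDimensional k V] (F : V →ₗ[Z] M) (v : V), F v = m →
    ∃ u : V, F u = m ∧ ∀ w ∈ l, ∃ n : ℕ, 1 ≤ n ∧ w ^ n • u = 0 := by
  intro l
  induction l with
  | nil =>
    intro _ V _ _ _ _ _ F v hv
    exact ⟨v, hv, by simp⟩
  | cons w l ih =>
    intro hl V _ _ _ _ _ F v hv
    obtain ⟨p, hp⟩ := hl w List.mem_cons_self
    obtain ⟨u, n, hn1, hFu, hwu⟩ := step (k := k) F m v hv w p hp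
    set K : Submodule Z V := LinearMap.ker ((LinearMap.lsmul Z V) (w ^ n)) with hK
    have huK : u ∈ K := by
      show (LinearMap.lsmul Z V) (w ^ n) u = 0
      simpa using hwu
    haveI : FiniteDimensional k K := inferInstanceAs (FiniteDimensional k (K.restrictScalars k))
    obtain ⟨u', hFu', hkill⟩ := ih (fun w' hw' => hl w' (List.mem_cons_of_mem _ hw'))
      K (F.comp K.subtype) ⟨u, huK⟩ (by simpa using hFu)
    refine ⟨(u' : V), by simpa using hFu', ?_⟩
    intro w' hw'
    rcases List.mem_cons.mp hw' with h | h
    · subst h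
      refine ⟨n, hn1, ?_⟩
      exact u'.2
    · obtain ⟨n', hn1', h0⟩ := hkill w' h
      refine ⟨n', hn1', ?_⟩
      have := congrArg (Subtype.val) h0
      simpa using this

end Aux

theorem genEigSet_exact
    {k Z M' M M'' : Type*} [Field k] [IsAlgClosed k]
    [CommRing Z] [Algebra k Z] (χ : Z →ₐ[k] k)
    [AddCommGroup M'] [Module k M'] [Module Z M'] [IsScalarTower k Z M']
    [AddCommGroup M] [Module k M] [Module Z M] [IsScalarTower k Z M]
    [AddCommGroup M''] [Module k M''] [Module Z M''] [IsScalarTower k Z M'']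
    (f : M' →ₗ[Z] M) (g : M →ₗ[Z] M'')
    (hexact : LinearMap.range f = LinearMap.ker g)
    (hM' : IsLocallyFiniteModule k Z M')
    (hM : IsLocallyFiniteModule k Z M)
    (hM'' : IsLocallyFiniteModule k Z M'') :
    f '' genEigSet χ M' = {m ∈ genEigSet χ M | g m = 0} := by
  classical
  apply Set.Subset.antisymm
  · rintro x ⟨m', hm', rfl⟩
    refine ⟨fun z => ?_, ?_⟩
    · obtain ⟨n, hn, h⟩ := hm' z
      exact ⟨n, hn, by rw [← map_smul, h, map_zero]⟩
    · have : f m' ∈ LinearMap.ker g := hexact ▸ LinearMap.mem_range_self f m'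
      exact this
  · rintro m ⟨hmEig, hgm⟩
    by_cases hm0 : m = 0
    · refine ⟨0, fun z => ⟨1, le_refl 1, smul_zero _⟩, by rw [map_zero, hm0]⟩
    have hmr : m ∈ LinearMap.range f := by rw [hexact]; exact hgm
    obtain ⟨m', hf⟩ := hmr
    obtain ⟨N, hm'N, hNfd⟩ := hM' m'
    haveI := hNfd
    haveI : FiniteDimensional k N := inferInstanceAs (FiniteDimensional k (N.restrictScalars k))
    -- the action of `Z` on `N` as `k`-endomorphisms
    set ρ : Z → Module.End k N := fun w => ((LinearMap.lsmul Z N) w).restrictScalars k with hρ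
    obtain ⟨b, hbsub, hbspan, hbli⟩ := exists_linearIndependent k (Set.range ρ)
    have hbfin : b.Finite := hbli.setFinite
    have hsub' : ∀ e : b, ∃ z : Z, ρ z = (e : Module.End k N) := fun e => hbsub e.2
    choose g0 hg0 using hsub'
    haveI := hbfin.to_subtype
    set t : Set Z := Set.range g0 with ht
    have htfin : t.Finite := Set.finite_range g0
    have him : ρ '' t = b := by
      ext y
      constructor
      · rintro ⟨-, ⟨e, rfl⟩, rfl⟩
        rw [hg0]; exact e.2
      · intro hy
        exact ⟨g0 ⟨y, hy⟩, ⟨⟨y, hy⟩, rfl⟩, hg0 _⟩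
    set S : Finset Z := htfin.toFinset with hS
    set l : List Z := S.toList.map (fun ζ => ζ - algebraMap k Z (χ ζ)) with hl
    have hlm : ∀ w ∈ l, ∃ p : ℕ, w ^ p • m = 0 := by
      intro w hw
      obtain ⟨ζ, hζ, rfl⟩ := List.mem_map.mp hw
      obtain ⟨p, -, hp⟩ := hmEig ζ
      exact ⟨p, hp⟩
    obtain ⟨v, hFv, hkill⟩ := iter (k := k) m l hlm N (f.comp N.subtype) ⟨m', hm'N⟩
      (by simpa using hf)
    have hfv : f (v : M') = m := by simpa using hFv
    refine ⟨(v : M'), ?_, hfv⟩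
    -- show that `v` lies in the generalized eigenspace
    intro z
    have hz_span : ρ z ∈ Submodule.span k (ρ '' t) := by
      rw [him, hbspan]
      exact Submodule.subset_span ⟨z, rfl⟩
    obtain ⟨r, cc, gg, hsum⟩ := Submodule.mem_span_set'.mp hz_span
    choose ζf hζt hζρ using fun i : Fin r => (gg i).2
    set wf : Fin r → Z := fun i => ζf i - algebraMap k Z (χ (ζf i)) with hwf
    have hwl : ∀ i, wf i ∈ l := by
      intro i
      exact List.mem_map.mpr ⟨ζf i, Finset.mem_toList.mpr (htfin.mem_toFinset.mpr (hζt i)), rfl⟩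
    have hkv : ∀ i : Fin r, ∃ n : ℕ, 1 ≤ n ∧ (wf i) ^ n • (v : M') = 0 := by
      intro i
      obtain ⟨n, hn1, h0⟩ := hkill (wf i) (hwl i)
      exact ⟨n, hn1, by have := congrArg (Subtype.val) h0; simpa using this⟩
    choose nn hnn1 hnnk using hkv
    set c : k := ∑ i, cc i * χ (ζf i) with hc
    have hsum' : (∑ i, cc i • ρ (ζf i)) = ρ z := by
      rw [← hsum]
      exact Finset.sum_congr rfl fun i _ => by rw [hζρ]
    have hpt : ∀ y : M', y ∈ N → (z - algebraMap k Z c) • y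
        = ∑ i, cc i • ((wf i) • y) := by
      intro y hy
      have h1 := congrArg (fun E : Module.End k N => ((E ⟨y, hy⟩ : N) : M')) hsum'
      simp only [LinearMap.sum_apply, LinearMap.smul_apply, hρ,
        LinearMap.restrictScalars_apply, LinearMap.lsmul_apply, AddSubmonoidClass.coe_finset_sum,
        SetLike.val_smul, SetLike.mk_smul_mk] at h1
      -- h1 : ∑ i, cc i • (ζf i • y) = z • y
      calc (z - algebraMap k Z c) • y = z • y - algebraMap k Z c • y := by rw [sub_smul]
        _ = ∑ i, cc i • (ζf i • y) - ∑ i, cc i • (algebraMap k Z (χ (ζf i)) • y) := by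
            rw [← h1, algebraMap_smul, hc, Finset.sum_smul]
            congr 1
            exact Finset.sum_congr rfl fun i _ => by
              rw [mul_smul, algebraMap_smul]
        _ = ∑ i, cc i • ((wf i) • y) := by
            rw [← Finset.sum_sub_distrib]
            exact Finset.sum_congr rfl fun i _ => by
              rw [hwf, sub_smul, smul_sub]
    set V' : Submodule Z M' :=
      N ⊓ ⨅ i : Fin r, LinearMap.ker ((LinearMap.lsmul Z M') ((wf i) ^ (nn i))) with hV'
    have hvV' : (v : M') ∈ V' := by
      refine ⟨v.2, (Submodule.mem_iInf _).mpr fun i => ?_⟩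
      show (LinearMap.lsmul Z M') ((wf i) ^ (nn i)) (v : M') = 0
      simpa using hnnk i
    set θ : Z → Module.End k V' := fun w => ((LinearMap.lsmul Z V') w).restrictScalars k with hθ
    have hθcoe : ∀ (w : Z) (n : ℕ) (x : V'), ((((θ w) ^ n) x : V') : M') = w ^ n • (x : M') := by
      intro w n x
      simp only [hθ]
      rw [lsmulk_pow_apply]
      rfl
    have hθnil : ∀ i, (θ (wf i)) ^ (nn i) = 0 := by
      intro i
      apply LinearMap.ext; intro x
      apply Subtype.ext
      rw [hθcoe]
      have hx : (x : M') ∈ LinearMap.ker ((LinearMap.lsmul Z M') ((wf i) ^ (nn i))) :=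
        (Submodule.mem_iInf _).mp x.2.2 i
      simpa using hx
    have hθmul : ∀ a b : Z, θ a * θ b = θ (a * b) := by
      intro a b; apply LinearMap.ext; intro x; apply Subtype.ext
      show a • (b • (x : M')) = (a * b) • (x : M')
      rw [mul_smul]
    have hcommθ : ∀ i j, Commute (θ (wf i)) (θ (wf j)) := by
      intro i j
      unfold Commute SemiconjBy
      rw [hθmul, hθmul, mul_comm]
    set E : Fin r → Module.End k V' := fun i => cc i • θ (wf i) with hE
    have hEnil : ∀ i ∈ Finset.univ, IsNilpotent (E i) := by
      intro i _
      exact ⟨nn i, by simp only [hE, smul_pow, hθnil i, smul_zero]⟩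
    have hEcomm : ∀ i j, i ∈ (Finset.univ : Finset (Fin r)) → j ∈ Finset.univ →
        Commute (E i) (E j) := by
      intro i j _ _
      exact ((hcommθ i j).smul_left (cc i)).smul_right (cc j)
    have hT : θ (z - algebraMap k Z c) = ∑ i, E i := by
      apply LinearMap.ext; intro x; apply Subtype.ext
      have lhs : ((θ (z - algebraMap k Z c) x : V') : M') = (z - algebraMap k Z c) • (x : M') :=
        rfl
      rw [lhs, hpt (x : M') x.2.1]
      simp only [LinearMap.sum_apply, AddSubmonoidClass.coe_finset_sum, hE,
        LinearMap.smul_apply, SetLike.val_smul]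
      rfl
    have hTnil : IsNilpotent (θ (z - algebraMap k Z c)) := by
      rw [hT]; exact Commute.isNilpotent_sum hEnil hEcomm
    obtain ⟨NN, hNN⟩ := hTnil
    have hT1 : (θ (z - algebraMap k Z c)) ^ (NN + 1) = 0 := by
      rw [pow_succ, hNN, zero_mul]
    have hvkill : (z - algebraMap k Z c) ^ (NN + 1) • (v : M') = 0 := by
      have h2 := congrArg (fun (E : Module.End k V') => ((E ⟨(v : M'), hvV'⟩ : V') : M')) hT1
      simp only [LinearMap.zero_apply, ZeroMemClass.coe_zero] at h2
      rwa [hθcoe] at h2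
    by_cases hcz : χ z = c
    · exact ⟨NN + 1, Nat.le_add_left 1 NN, by rw [hcz]; exact hvkill⟩
    · exfalso
      have hmkill : (z - algebraMap k Z c) ^ (NN + 1) • m = 0 := by
        rw [← hfv, ← map_smul, hvkill, map_zero]
      obtain ⟨p, -, hpm⟩ := hmEig z
      exact hm0 (eig_unique z c (χ z) (fun h => hcz h.symm) m (NN + 1) p hmkill hpm)
end

section
/- Let λ ∈ E be such that λ+ρ is regular, and let α, β ∈ Φ⁺ be orthogonal positive roots ((α,β) = 0) with ⟨λ+ρ, α∨⟩ = ⟨λ+ρ, β∨⟩. If ⟨λ+ρ, α∨⟩ > 0 then l((s_α s_β) * λ) > l(s_β * λ) > l(λ), and if ⟨λ+ρ, α∨⟩ < 0 then l((s_α s_β) * λ) < l(s_β * λ) < l(λ). (Note that ⟨λ+ρ, α∨⟩ ≠ 0 by regularity.) -/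
open scoped RealInnerProductSpace

/-- The reflection `s_α(x) = x - ⟨x, α∨⟩ α` attached to a root `α`, where
`⟨x, α∨⟩ = 2(x,α)/(α,α)`. -/
noncomputable def sRefl {E : Type*} [NormedAddCommGroup E] [InnerProductSpace ℝ E]
    (α x : E) : E :=
  x - (2 * ⟪x, α⟫ / ⟪α, α⟫) • α

section Aux

variable {E : Type*} [NormedAddCommGroup E] [InnerProductSpace ℝ E]

lemma inner_self_pos' {a : E} (ha : a ≠ 0) : (0:ℝ) < ⟪a, a⟫ := by
  rcases (real_inner_self_nonneg (x := a)).lt_or_eq with h | h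
  · exact h
  · exact absurd (inner_self_eq_zero.mp h.symm) ha

lemma inner_sRefl_self (β x : E) (h : ⟪β,β⟫ ≠ 0) : ⟪sRefl β x, β⟫ = -⟪x, β⟫ := by
  simp only [sRefl, inner_sub_left, real_inner_smul_left]
  field_simp
  ring

lemma inner_sRefl (β x y : E) : ⟪sRefl β x, y⟫ = ⟪x, sRefl β y⟫ := by
  simp only [sRefl, inner_sub_left, inner_sub_right, real_inner_smul_left,
    real_inner_smul_right]
  rw [real_inner_comm β y]
  ring

lemma sRefl_sRefl (β x : E) (h : ⟪β,β⟫ ≠ 0) : sRefl β (sRefl β x) = x := by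
  have h1 : ⟪sRefl β x, β⟫ = -⟪x, β⟫ := inner_sRefl_self β x h
  simp only [sRefl] at h1 ⊢
  rw [h1]
  have : (2 * -⟪x,β⟫ / ⟪β,β⟫) = -(2 * ⟪x,β⟫ / ⟪β,β⟫) := by ring
  rw [this, neg_smul, sub_neg_eq_add, sub_add_cancel]

lemma sRefl_add (β x y : E) : sRefl β (x + y) = sRefl β x + sRefl β y := by
  simp only [sRefl, inner_add_left]
  have : (2 * (⟪x,β⟫ + ⟪y,β⟫) / ⟪β,β⟫) = 2 * ⟪x,β⟫ / ⟪β,β⟫ + 2 * ⟪y,β⟫ / ⟪β,β⟫ := by ring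
  rw [this, add_smul]
  abel

lemma sRefl_self (β : E) (h : ⟪β,β⟫ ≠ 0) : sRefl β β = -β := by
  simp only [sRefl]
  rw [mul_div_assoc, div_self h, mul_one]
  module


lemma root_sum_mem (Φ : Finset E)
    (hΦ0 : (0 : E) ∉ Φ)
    (hΦrefl : ∀ α ∈ Φ, ∀ β ∈ Φ, sRefl α β ∈ Φ)
    (hΦred : ∀ α ∈ Φ, ∀ t : ℝ, t • α ∈ Φ → t = 1 ∨ t = -1)
    (hΦint : ∀ α ∈ Φ, ∀ β ∈ Φ, ∃ n : ℤ, 2 * ⟪β, α⟫ / ⟪α, α⟫ = (n : ℝ))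
    {a b : E} (ha : a ∈ Φ) (hb : b ∈ Φ) (hab : ⟪a, b⟫ < 0) (hne : a ≠ -b) :
    a + b ∈ Φ := by
  have ha0 : a ≠ 0 := fun h => hΦ0 (h ▸ ha)
  have hb0 : b ≠ 0 := fun h => hΦ0 (h ▸ hb)
  have qa : (0:ℝ) < ⟪a,a⟫ := inner_self_pos' ha0
  have qb : (0:ℝ) < ⟪b,b⟫ := inner_self_pos' hb0
  obtain ⟨n1, hn1⟩ := hΦint b hb a ha
  obtain ⟨n2, hn2⟩ := hΦint a ha b hb
  have hba : ⟪b, a⟫ = ⟪a, b⟫ := real_inner_comm a b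
  have hn1neg : n1 < 0 := by
    have : (n1:ℝ) < 0 := by
      rw [← hn1]; exact div_neg_of_neg_of_pos (by linarith) qb
    exact_mod_cast this
  have hn2neg : n2 < 0 := by
    have : (n2:ℝ) < 0 := by
      rw [← hn2, hba]; exact div_neg_of_neg_of_pos (by linarith) qa
    exact_mod_cast this
  -- key claim: n1 = -1 or n2 = -1
  have key : n1 = -1 ∨ n2 = -1 := by
    by_contra hcon
    push_neg at hcon
    have h1 : n1 ≤ -2 := by omega
    have h2 : n2 ≤ -2 := by omega
    have hprodZ : (4:ℤ) ≤ n1 * n2 := by nlinarith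
    have hprod : (4:ℝ) ≤ (n1:ℝ) * (n2:ℝ) := by exact_mod_cast hprodZ
    set x := ⟪a,b⟫ with hx
    have hformula : (n1:ℝ) * (n2:ℝ) * (⟪a,a⟫ * ⟪b,b⟫) = 4 * x^2 := by
      rw [← hn1, ← hn2, hba]
      field_simp
      ring
    have hge : ⟪a,a⟫ * ⟪b,b⟫ ≤ x^2 := by nlinarith
    have hna : ⟪a,a⟫ = ‖a‖ * ‖a‖ := real_inner_self_eq_norm_mul_norm a
    have hnb : ⟪b,b⟫ = ‖b‖ * ‖b‖ := real_inner_self_eq_norm_mul_norm b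
    have hcs : |x| ≤ ‖a‖ * ‖b‖ := abs_real_inner_le_norm a b
    have hxabs : |x| = -x := abs_of_neg hab
    have hxeq : -x = ‖a‖ * ‖b‖ := by nlinarith [abs_nonneg x, norm_nonneg a, norm_nonneg b]
    have heqn : ⟪a, -b⟫ = ‖a‖ * ‖-b‖ := by
      rw [inner_neg_right, norm_neg, ← hxeq, hx]
    have hv := inner_eq_norm_mul_iff_real.mp heqn
    rw [norm_neg, smul_neg] at hv
    -- hv : ‖b‖ • a = -(‖a‖ • b)
    have hanorm : ‖a‖ ≠ 0 := norm_ne_zero_iff.mpr ha0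
    have htb : (-(‖b‖/‖a‖)) • a = b := by
      rw [neg_smul, div_eq_mul_inv, mul_comm, mul_smul, hv, smul_neg, neg_neg,
        smul_smul, inv_mul_cancel₀ hanorm, one_smul]
    have hmem : (-(‖b‖/‖a‖)) • a ∈ Φ := by rw [htb]; exact hb
    rcases hΦred a ha (-(‖b‖/‖a‖)) hmem with ht | ht
    · have hpos' : (0:ℝ) < ‖b‖/‖a‖ :=
        div_pos (norm_pos_iff.mpr hb0) (norm_pos_iff.mpr ha0)
      linarith
    · apply hne
      rw [ht] at htb
      rw [← htb, neg_one_smul, neg_neg]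
  rcases key with h | h
  · have := hΦrefl b hb a ha
    rw [sRefl, hn1, h] at this
    simpa using this
  · have := hΦrefl a ha b hb
    rw [sRefl, hn2, h] at this
    have : b - (-1:ℝ) • a ∈ Φ := by simpa using this
    rw [neg_one_smul, sub_neg_eq_add, add_comm] at this
    exact (add_comm a b) ▸ this

lemma lemC_aux (Φ Φpos : Finset E)
    (hΦ0 : (0 : E) ∉ Φ)
    (hΦneg : ∀ α ∈ Φ, -α ∈ Φ)
    (hΦrefl : ∀ α ∈ Φ, ∀ β ∈ Φ, sRefl α β ∈ Φ)
    (hΦred : ∀ α ∈ Φ, ∀ t : ℝ, t • α ∈ Φ → t = 1 ∨ t = -1)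
    (hΦint : ∀ α ∈ Φ, ∀ β ∈ Φ, ∃ n : ℤ, 2 * ⟪β, α⟫ / ⟪α, α⟫ = (n : ℝ))
    (hposΦ : Φpos ⊆ Φ)
    (hpos : ∀ α ∈ Φ, (α ∈ Φpos ↔ -α ∉ Φpos))
    (hposadd : ∀ α ∈ Φpos, ∀ β ∈ Φpos, α + β ∈ Φ → α + β ∈ Φpos)
    (β : E) (hβ : β ∈ Φpos) :
    ∀ k : ℕ, ∀ γ ∈ Φpos, sRefl β γ ∉ Φpos → 2 * ⟪γ, β⟫ / ⟪β, β⟫ ≠ -(k:ℝ) := by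
  intro k
  induction k using Nat.strong_induction_on with
  | _ k ih =>
    intro γ hγ hsγ hc
    have hβΦ : β ∈ Φ := hposΦ hβ
    have hγΦ : γ ∈ Φ := hposΦ hγ
    have hβ0 : β ≠ 0 := fun h => hΦ0 (h ▸ hβΦ)
    have qβ : (0:ℝ) < ⟪β,β⟫ := inner_self_pos' hβ0
    match k with
    | 0 =>
      have h0 : ⟪γ,β⟫ = 0 := by
        have : 2 * ⟪γ,β⟫ / ⟪β,β⟫ = 0 := by rw [hc]; norm_num
        have := (div_eq_zero_iff.mp this).resolve_right (ne_of_gt qβ)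
        linarith
      apply hsγ
      have : sRefl β γ = γ := by simp [sRefl, h0]
      rw [this]; exact hγ
    | (k+1) =>
      have hγβ : ⟪γ,β⟫ < 0 := by
        have hlt : 2 * ⟪γ,β⟫ / ⟪β,β⟫ < 0 := by
          rw [hc]; push_cast
          have : (0:ℝ) < (k:ℝ) + 1 := by positivity
          linarith
        by_contra hge
        push_neg at hge
        have : 0 ≤ 2 * ⟪γ,β⟫ / ⟪β,β⟫ := by positivity
        linarith
      have hγne : γ ≠ -β := by
        intro h
        have h1 := (hpos γ hγΦ).mp hγ
        rw [h, neg_neg] at h1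
        exact h1 hβ
      have hγβΦ : γ + β ∈ Φ :=
        root_sum_mem Φ hΦ0 hΦrefl hΦred hΦint hγΦ hβΦ hγβ hγne
      have hγsum : γ + β ∈ Φpos := hposadd γ hγ β hβ hγβΦ
      match k with
      | 0 =>
        -- c = -1, sRefl β γ = γ + β ∈ Φpos, contradiction
        apply hsγ
        have : sRefl β γ = γ + β := by
          rw [sRefl, hc]
          push_cast
          module
        rw [this]; exact hγsum
      | (k+1) =>
        -- c = -(k+2) ≤ -2
        have hsγΦ : sRefl β γ ∈ Φ := hΦrefl β hβΦ γ hγΦ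
        set δ : E := -(sRefl β γ) with hδ
        have hδΦ : δ ∈ Φ := hΦneg _ hsγΦ
        have hδpos : δ ∈ Φpos := by
          by_contra hcon
          exact hsγ ((hpos _ hsγΦ).mpr hcon)
        have hδβ : ⟪δ,β⟫ = ⟪γ,β⟫ := by
          rw [hδ, inner_neg_left, inner_sRefl_self β γ (ne_of_gt qβ), neg_neg]
        have hδβneg : ⟪δ,β⟫ < 0 := hδβ ▸ hγβ
        have hδne : δ ≠ -β := by
          intro h
          have h1 := (hpos δ hδΦ).mp hδpos
          rw [h, neg_neg] at h1
          exact h1 hβ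
        have hδβΦ : δ + β ∈ Φ :=
          root_sum_mem Φ hΦ0 hΦrefl hΦred hΦint hδΦ hβΦ hδβneg hδne
        have hδsum : δ + β ∈ Φpos := hposadd δ hδpos β hβ hδβΦ
        have hδsumΦ : δ + β ∈ Φ := hposΦ hδsum
        have hnew : sRefl β (γ + β) ∉ Φpos := by
          have h1 : sRefl β (γ + β) = -(δ + β) := by
            rw [sRefl_add, sRefl_self β (ne_of_gt qβ), hδ]
            abel
          rw [h1]
          exact (hpos _ hδsumΦ).mp hδsum
        have hcnew : 2 * ⟪γ + β, β⟫ / ⟪β, β⟫ = -((k:ℕ):ℝ) := by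
          have h2 : 2 * ⟪γ + β, β⟫ / ⟪β, β⟫ = 2 * ⟪γ,β⟫ / ⟪β,β⟫ + 2 := by
            rw [inner_add_left]
            field_simp
          rw [h2, hc]
          push_cast
          ring
        exact ih k (by omega) (γ + β) hγsum hnew hcnew

lemma lemC (Φ Φpos : Finset E)
    (hΦ0 : (0 : E) ∉ Φ)
    (hΦneg : ∀ α ∈ Φ, -α ∈ Φ)
    (hΦrefl : ∀ α ∈ Φ, ∀ β ∈ Φ, sRefl α β ∈ Φ)
    (hΦred : ∀ α ∈ Φ, ∀ t : ℝ, t • α ∈ Φ → t = 1 ∨ t = -1)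
    (hΦint : ∀ α ∈ Φ, ∀ β ∈ Φ, ∃ n : ℤ, 2 * ⟪β, α⟫ / ⟪α, α⟫ = (n : ℝ))
    (hposΦ : Φpos ⊆ Φ)
    (hpos : ∀ α ∈ Φ, (α ∈ Φpos ↔ -α ∉ Φpos))
    (hposadd : ∀ α ∈ Φpos, ∀ β ∈ Φpos, α + β ∈ Φ → α + β ∈ Φpos)
    {β γ : E} (hβ : β ∈ Φpos) (hγ : γ ∈ Φpos) (hsγ : sRefl β γ ∉ Φpos) :
    0 < ⟪γ, β⟫ := by
  have hβΦ : β ∈ Φ := hposΦ hβ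
  have hγΦ : γ ∈ Φ := hposΦ hγ
  have hβ0 : β ≠ 0 := fun h => hΦ0 (h ▸ hβΦ)
  have qβ : (0:ℝ) < ⟪β,β⟫ := inner_self_pos' hβ0
  obtain ⟨n, hn⟩ := hΦint β hβΦ γ hγΦ
  by_contra hle
  push_neg at hle
  have hn0 : n ≤ 0 := by
    have : (n:ℝ) ≤ 0 := by
      rw [← hn]
      apply div_nonpos_of_nonpos_of_nonneg (by linarith) (le_of_lt qβ)
    exact_mod_cast this
  apply lemC_aux Φ Φpos hΦ0 hΦneg hΦrefl hΦred hΦint hposΦ hpos hposadd β hβ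
    (-n).toNat γ hγ hsγ
  rw [hn]
  have : ((-n).toNat : ℝ) = -(n:ℝ) := by
    have : ((-n).toNat : ℤ) = -n := Int.toNat_of_nonneg (by omega)
    exact_mod_cast this
  rw [this, neg_neg]

lemma sRefl_neg (β x : E) : sRefl β (-x) = -(sRefl β x) := by
  simp only [sRefl, inner_neg_left]
  have : 2 * -⟪x,β⟫ / ⟪β,β⟫ = -(2 * ⟪x,β⟫ / ⟪β,β⟫) := by ring
  rw [this]
  module

lemma card_step (Φ Φpos : Finset E)
    (hΦ0 : (0 : E) ∉ Φ)
    (hΦneg : ∀ α ∈ Φ, -α ∈ Φ)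
    (hΦrefl : ∀ α ∈ Φ, ∀ β ∈ Φ, sRefl α β ∈ Φ)
    (hΦred : ∀ α ∈ Φ, ∀ t : ℝ, t • α ∈ Φ → t = 1 ∨ t = -1)
    (hΦint : ∀ α ∈ Φ, ∀ β ∈ Φ, ∃ n : ℤ, 2 * ⟪β, α⟫ / ⟪α, α⟫ = (n : ℝ))
    (hposΦ : Φpos ⊆ Φ)
    (hpos : ∀ α ∈ Φ, (α ∈ Φpos ↔ -α ∉ Φpos))
    (hposadd : ∀ α ∈ Φpos, ∀ β ∈ Φpos, α + β ∈ Φ → α + β ∈ Φpos)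
    (μ : E) (hreg : ∀ γ ∈ Φ, ⟪μ, γ⟫ ≠ 0) {β : E} (hβ : β ∈ Φpos) :
    (0 < ⟪μ, β⟫ →
      (Φpos.filter fun γ => ⟪μ, γ⟫ < 0).card <
        (Φpos.filter fun γ => ⟪sRefl β μ, γ⟫ < 0).card) ∧
    (⟪μ, β⟫ < 0 →
      (Φpos.filter fun γ => ⟪sRefl β μ, γ⟫ < 0).card <
        (Φpos.filter fun γ => ⟪μ, γ⟫ < 0).card) := by
  classical
  have hβΦ : β ∈ Φ := hposΦ hβ
  have hβ0 : β ≠ 0 := fun h => hΦ0 (h ▸ hβΦ)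
  have qβ : (0:ℝ) < ⟪β,β⟫ := inner_self_pos' hβ0
  have qβ' : ⟪β,β⟫ ≠ 0 := ne_of_gt qβ
  -- `T` sends γ to -(s_β γ)
  set T : E → E := fun γ => -(sRefl β γ) with hT
  -- basic facts about T on M := {γ ∈ Φpos : s_β γ ∉ Φpos}
  have hTmem : ∀ γ ∈ Φpos, sRefl β γ ∉ Φpos → (T γ ∈ Φpos ∧ sRefl β (T γ) ∉ Φpos) := by
    intro γ hγ hsγ
    have hγΦ : γ ∈ Φ := hposΦ hγ
    have hsγΦ : sRefl β γ ∈ Φ := hΦrefl β hβΦ γ hγΦ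
    constructor
    · by_contra h
      exact hsγ ((hpos _ hsγΦ).mpr h)
    · have h1 : sRefl β (T γ) = -γ := by
        rw [hT]
        simp only
        rw [sRefl_neg, sRefl_sRefl β γ qβ']
      rw [h1]
      exact (hpos γ hγΦ).mp hγ
  have hTT : ∀ γ : E, T (T γ) = γ := by
    intro γ
    simp only [hT, sRefl_neg, neg_neg, sRefl_sRefl β _ qβ']
  have hTform : ∀ γ : E, T γ = (2 * ⟪γ,β⟫ / ⟪β,β⟫) • β - γ := by
    intro γ
    simp only [hT, sRefl, neg_sub]
  have hinnerT : ∀ γ : E, ⟪μ, T γ⟫ = (2 * ⟪γ,β⟫ / ⟪β,β⟫) * ⟪μ,β⟫ - ⟪μ,γ⟫ := by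
    intro γ
    rw [hTform, inner_sub_right, real_inner_smul_right]
  have hinnerT' : ∀ γ : E, ⟪sRefl β μ, γ⟫ = -⟪μ, T γ⟫ := by
    intro γ
    rw [inner_sRefl, hT]
    simp only [inner_neg_right, neg_neg]
  -- the coefficient is positive on M
  have hcpos : ∀ γ ∈ Φpos, sRefl β γ ∉ Φpos → 0 < 2 * ⟪γ,β⟫ / ⟪β,β⟫ := by
    intro γ hγ hsγ
    have := lemC Φ Φpos hΦ0 hΦneg hΦrefl hΦred hΦint hposΦ hpos hposadd hβ hγ hsγ
    positivity
  -- split the two inversion counts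
  have split : ∀ ν : E,
      (Φpos.filter fun γ => ⟪ν, γ⟫ < 0).card =
        (Φpos.filter fun γ => ⟪ν, γ⟫ < 0 ∧ sRefl β γ ∈ Φpos).card +
        (Φpos.filter fun γ => ⟪ν, γ⟫ < 0 ∧ sRefl β γ ∉ Φpos).card := by
    intro ν
    rw [← Finset.filter_filter, ← Finset.filter_filter,
      Finset.card_filter_add_card_filter_not]
  -- the P-parts have equal card
  have eqP : (Φpos.filter fun γ => ⟪sRefl β μ, γ⟫ < 0 ∧ sRefl β γ ∈ Φpos).card =
      (Φpos.filter fun γ => ⟪μ, γ⟫ < 0 ∧ sRefl β γ ∈ Φpos).card := by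
    apply Finset.card_nbij' (sRefl β) (sRefl β)
    · intro γ hγ
      simp only [Finset.mem_filter, Finset.mem_coe] at hγ ⊢
      obtain ⟨h1, h2, h3⟩ := hγ
      refine ⟨h3, ?_, ?_⟩
      · rw [← inner_sRefl]; exact h2
      · rw [sRefl_sRefl β γ qβ']; exact h1
    · intro γ hγ
      simp only [Finset.mem_filter, Finset.mem_coe] at hγ ⊢
      obtain ⟨h1, h2, h3⟩ := hγ
      refine ⟨h3, ?_, ?_⟩
      · rw [inner_sRefl, sRefl_sRefl β γ qβ']; exact h2
      · rw [sRefl_sRefl β γ qβ']; exact h1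
    · intro γ _; exact sRefl_sRefl β γ qβ'
    · intro γ _; exact sRefl_sRefl β γ qβ'
  -- the M-part of N(s_β μ) is in bijection with the "positive" M-part of N(μ)
  have eqM : (Φpos.filter fun γ => ⟪sRefl β μ, γ⟫ < 0 ∧ sRefl β γ ∉ Φpos).card =
      (Φpos.filter fun γ => 0 < ⟪μ, γ⟫ ∧ sRefl β γ ∉ Φpos).card := by
    apply Finset.card_nbij' T T
    · intro γ hγ
      simp only [Finset.mem_filter, Finset.mem_coe] at hγ ⊢
      obtain ⟨h1, h2, h3⟩ := hγ
      obtain ⟨hm, hs⟩ := hTmem γ h1 h3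
      refine ⟨hm, ?_, hs⟩
      rw [hinnerT'] at h2
      linarith
    · intro γ hγ
      simp only [Finset.mem_filter, Finset.mem_coe] at hγ ⊢
      obtain ⟨h1, h2, h3⟩ := hγ
      obtain ⟨hm, hs⟩ := hTmem γ h1 h3
      refine ⟨hm, ?_, hs⟩
      rw [hinnerT', hTT]
      linarith
    · intro γ _; exact hTT γ
    · intro γ _; exact hTT γ
  set A := Φpos.filter fun γ => ⟪μ, γ⟫ < 0 ∧ sRefl β γ ∉ Φpos with hA
  set B := Φpos.filter fun γ => 0 < ⟪μ, γ⟫ ∧ sRefl β γ ∉ Φpos with hB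
  have hTβ : T β = β := by
    simp only [hT]
    rw [sRefl_self β qβ', neg_neg]
  have hsββ : sRefl β β ∉ Φpos := by
    rw [sRefl_self β qβ']
    exact (hpos β hβΦ).mp hβ
  constructor
  · -- 0 < ⟪μ, β⟫
    intro hμβ
    have hβB : β ∈ B := by
      rw [hB]; simp only [Finset.mem_filter]
      exact ⟨hβ, hμβ, hsββ⟩
    have hinj : A.card ≤ (B.erase β).card := by
      apply Finset.card_le_card_of_injOn T
      · intro γ hγ
        rw [hA] at hγ
        simp only [Finset.mem_filter, Finset.mem_coe] at hγ
        obtain ⟨h1, h2, h3⟩ := hγ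
        obtain ⟨hm, hs⟩ := hTmem γ h1 h3
        have hpos' : 0 < ⟪μ, T γ⟫ := by
          have hc := hcpos γ h1 h3
          have := mul_pos hc hμβ
          rw [hinnerT]
          linarith
        rw [Finset.mem_coe, Finset.mem_erase]
        refine ⟨?_, ?_⟩
        · intro h
          have hγβ' : γ = β := by rw [← hTT γ, h, hTβ]
          rw [hγβ'] at h2
          linarith
        · rw [hB]; simp only [Finset.mem_filter]
          exact ⟨hm, hpos', hs⟩
      · intro γ1 h1 γ2 h2 h
        have := congrArg T h
        rwa [hTT, hTT] at this
    have hcard : (B.erase β).card < B.card := Finset.card_erase_lt_of_mem hβB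
    have h1 := split μ
    have h2 := split (sRefl β μ)
    rw [eqP, eqM] at h2
    simp only [hA, hB] at hinj hcard h1 h2
    omega
  · -- ⟪μ, β⟫ < 0
    intro hμβ
    have hβA : β ∈ A := by
      rw [hA]; simp only [Finset.mem_filter]
      exact ⟨hβ, hμβ, hsββ⟩
    have hinj : B.card ≤ (A.erase β).card := by
      apply Finset.card_le_card_of_injOn T
      · intro γ hγ
        rw [hB] at hγ
        simp only [Finset.mem_filter, Finset.mem_coe] at hγ
        obtain ⟨h1, h2, h3⟩ := hγ
        obtain ⟨hm, hs⟩ := hTmem γ h1 h3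
        have hneg' : ⟪μ, T γ⟫ < 0 := by
          have hc := hcpos γ h1 h3
          have := mul_pos hc (neg_pos.mpr hμβ)
          rw [hinnerT]
          nlinarith
        rw [Finset.mem_coe, Finset.mem_erase]
        refine ⟨?_, ?_⟩
        · intro h
          have hγβ' : γ = β := by rw [← hTT γ, h, hTβ]
          rw [hγβ'] at h2
          linarith
        · rw [hA]; simp only [Finset.mem_filter]
          exact ⟨hm, hneg', hs⟩
      · intro γ1 h1 γ2 h2 h
        have := congrArg T h
        rwa [hTT, hTT] at this
    have hcard : (A.erase β).card < A.card := Finset.card_erase_lt_of_mem hβA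
    have h1 := split μ
    have h2 := split (sRefl β μ)
    rw [eqP, eqM] at h2
    simp only [hA, hB] at hinj hcard h1 h2
    omega

end Aux

/-- Let `λ+ρ` be regular and let `α, β` be orthogonal positive roots with
`⟨λ+ρ, α∨⟩ = ⟨λ+ρ, β∨⟩`.  If `⟨λ+ρ, α∨⟩ > 0` then
`l((s_α s_β) * λ) > l(s_β * λ) > l(λ)`, and if `⟨λ+ρ, α∨⟩ < 0` then
`l((s_α s_β) * λ) < l(s_β * λ) < l(λ)`, where `l(μ)` denotes the number of positive
roots `γ` with `(μ+ρ, γ) < 0` (recall `w*λ + ρ = w(λ+ρ)`). -/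
theorem card_inversions_sRefl_sRefl
    {E : Type*} [NormedAddCommGroup E] [InnerProductSpace ℝ E] [FiniteDimensional ℝ E]
    (Φ Φpos : Finset E)
    -- `Φ` is a finite reduced root system:
    (hΦ0 : (0 : E) ∉ Φ)
    (hΦneg : ∀ α ∈ Φ, -α ∈ Φ)
    (hΦrefl : ∀ α ∈ Φ, ∀ β ∈ Φ, sRefl α β ∈ Φ)
    (hΦred : ∀ α ∈ Φ, ∀ t : ℝ, t • α ∈ Φ → t = 1 ∨ t = -1)
    (hΦint : ∀ α ∈ Φ, ∀ β ∈ Φ, ∃ n : ℤ, 2 * ⟪β, α⟫ / ⟪α, α⟫ = (n : ℝ))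
    -- `Φpos` is a system of positive roots:
    (hposΦ : Φpos ⊆ Φ)
    (hpos : ∀ α ∈ Φ, (α ∈ Φpos ↔ -α ∉ Φpos))
    (hposadd : ∀ α ∈ Φpos, ∀ β ∈ Φpos, α + β ∈ Φ → α + β ∈ Φpos)
    -- `ρ` is the half-sum of the positive roots:
    (ρ : E) (hρ : ρ = (2 : ℝ)⁻¹ • ∑ α ∈ Φpos, α)
    -- `λ+ρ` is regular:
    (lam : E) (hreg : ∀ α ∈ Φ, ⟪lam + ρ, α⟫ ≠ 0)
    -- `α, β` are orthogonal positive roots with `⟨λ+ρ, α∨⟩ = ⟨λ+ρ, β∨⟩`: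
    (α β : E) (hα : α ∈ Φpos) (hβ : β ∈ Φpos) (horth : ⟪α, β⟫ = 0)
    (hpair : 2 * ⟪lam + ρ, α⟫ / ⟪α, α⟫ = 2 * ⟪lam + ρ, β⟫ / ⟪β, β⟫) :
    (0 < 2 * ⟪lam + ρ, α⟫ / ⟪α, α⟫ →
      (Φpos.filter fun γ => ⟪sRefl β (lam + ρ), γ⟫ < 0).card <
        (Φpos.filter fun γ => ⟪sRefl α (sRefl β (lam + ρ)), γ⟫ < 0).card ∧
      (Φpos.filter fun γ => ⟪lam + ρ, γ⟫ < 0).card <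
        (Φpos.filter fun γ => ⟪sRefl β (lam + ρ), γ⟫ < 0).card) ∧
    (2 * ⟪lam + ρ, α⟫ / ⟪α, α⟫ < 0 →
      (Φpos.filter fun γ => ⟪sRefl α (sRefl β (lam + ρ)), γ⟫ < 0).card <
        (Φpos.filter fun γ => ⟪sRefl β (lam + ρ), γ⟫ < 0).card ∧
      (Φpos.filter fun γ => ⟪sRefl β (lam + ρ), γ⟫ < 0).card <
        (Φpos.filter fun γ => ⟪lam + ρ, γ⟫ < 0).card) := by
  set μ := lam + ρ with hμ
  have hαΦ : α ∈ Φ := hposΦ hα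
  have hβΦ : β ∈ Φ := hposΦ hβ
  have hα0 : α ≠ 0 := fun h => hΦ0 (h ▸ hαΦ)
  have hβ0 : β ≠ 0 := fun h => hΦ0 (h ▸ hβΦ)
  have qα : (0:ℝ) < ⟪α,α⟫ := inner_self_pos' hα0
  have qβ : (0:ℝ) < ⟪β,β⟫ := inner_self_pos' hβ0
  have hreg' : ∀ γ ∈ Φ, ⟪sRefl β μ, γ⟫ ≠ 0 := by
    intro γ hγ
    rw [inner_sRefl]
    exact hreg _ (hΦrefl β hβΦ γ hγ)
  have hsα : sRefl β α = α := by
    rw [sRefl, horth]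
    simp
  have hinner2 : ⟪sRefl β μ, α⟫ = ⟪μ, α⟫ := by
    rw [inner_sRefl, hsα]
  have step1 := card_step Φ Φpos hΦ0 hΦneg hΦrefl hΦred hΦint hposΦ hpos hposadd μ hreg hβ
  have step2 := card_step Φ Φpos hΦ0 hΦneg hΦrefl hΦred hΦint hposΦ hpos hposadd
    (sRefl β μ) hreg' hα
  constructor
  · intro h
    have hμα : 0 < ⟪μ, α⟫ := by
      by_contra hc
      push_neg at hc
      have : 2 * ⟪μ,α⟫ / ⟪α,α⟫ ≤ 0 :=
        div_nonpos_of_nonpos_of_nonneg (by linarith) (le_of_lt qα)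
      linarith
    have hμβ : 0 < ⟪μ, β⟫ := by
      rw [hpair] at h
      by_contra hc
      push_neg at hc
      have : 2 * ⟪μ,β⟫ / ⟪β,β⟫ ≤ 0 :=
        div_nonpos_of_nonpos_of_nonneg (by linarith) (le_of_lt qβ)
      linarith
    exact ⟨step2.1 (hinner2 ▸ hμα), step1.1 hμβ⟩
  · intro h
    have hμα : ⟪μ, α⟫ < 0 := by
      by_contra hc
      push_neg at hc
      have : 0 ≤ 2 * ⟪μ,α⟫ / ⟪α,α⟫ := by positivity
      linarith
    have hμβ : ⟪μ, β⟫ < 0 := by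
      rw [hpair] at h
      by_contra hc
      push_neg at hc
      have : 0 ≤ 2 * ⟪μ,β⟫ / ⟪β,β⟫ := by positivity
      linarith
    exact ⟨step2.2 (hinner2 ▸ hμα), step1.2 hμβ⟩
end
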